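/- Let G be a simple graph with n vertices, m edges, W wedges, T triangles, and transitivity κ = 3T/W > 0. If W ≥ m, then m/√T ≤ √(3n/κ). -/

import Mathlib

/-
By Cauchy–Schwarz on the degree sequence, `(2m)² = (∑ d_v)² ≤ n ∑ d_v² = n (2W + 2m)`,
and `m ≤ W` turns this into `m² ≤ nW`. Since `3n/κ = nW/T` (with Lean's `x / 0 = 0` this holds
even when `T` or `W` vanishes), the claim is `m/√T ≤ √(nW)/√T`.
-/

open Finset

theorem Nat.sq_eq_two_mul_choose_two_add (d : ℕ) : d ^ 2 = 2 * d.choose 2 + d := by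
  induction d with
  | zero => rfl
  | succ k ih => rw [Nat.choose_succ_succ', Nat.choose_one_right]; grind

theorem Real.div_sqrt_le_sqrt_div_of_sq_le {x a : ℝ} (h : x ^ 2 ≤ a) (t : ℝ) :
    x / √t ≤ √(a / t) := by
  rw [Real.sqrt_div ((sq_nonneg x).trans h)]
  gcongr
  exact Real.le_sqrt_of_sq_le h

namespace SimpleGraph

variable {V : Type*} [Fintype V] (G : SimpleGraph V) [DecidableRel G.Adj]

theorem sum_degree_sq :
    ∑ v, G.degree v ^ 2 = 2 * ∑ v, (G.degree v).choose 2 + 2 * #G.edgeFinset := by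
  simp only [Nat.sq_eq_two_mul_choose_two_add, sum_add_distrib, ← mul_sum,
    sum_degrees_eq_twice_card_edges]

theorem two_mul_sq_card_edgeFinset_le :
    2 * #G.edgeFinset ^ 2 ≤ Fintype.card V * (∑ v, (G.degree v).choose 2 + #G.edgeFinset) := by
  have h := sq_sum_le_card_mul_sum_sq (s := univ) (f := fun v ↦ G.degree v)
  rw [sum_degrees_eq_twice_card_edges, sum_degree_sq, card_univ] at h
  nlinarith

theorem sq_card_edgeFinset_le (h : #G.edgeFinset ≤ ∑ v, (G.degree v).choose 2) :
    #G.edgeFinset ^ 2 ≤ Fintype.card V * ∑ v, (G.degree v).choose 2 := by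
  have := G.two_mul_sq_card_edgeFinset_le
  nlinarith [Nat.mul_le_mul_left (Fintype.card V) h]

end SimpleGraph

theorem edges_div_sqrt_triangles_le_general
    {V : Type*} [Fintype V] (G : SimpleGraph V) [DecidableRel G.Adj]
    (n m W T : ℕ) (hn : n = Fintype.card V) (hm : m = G.edgeFinset.card)
    (hW : W = ∑ v : V, (G.degree v).choose 2)
    (hWm : m ≤ W)
    (κ : ℝ) (hκ : κ = 3 * (T : ℝ) / (W : ℝ)) :
    (m : ℝ) / Real.sqrt T ≤ Real.sqrt (3 * n / κ) := by
  have hsq : (m : ℝ) ^ 2 ≤ n * W := by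
    subst hn hm hW
    exact_mod_cast G.sq_card_edgeFinset_le hWm
  have hκ' : 3 * (n : ℝ) / κ = n * W / T := by
    rw [hκ, div_div_eq_mul_div]
    ring
  rw [hκ']
  exact Real.div_sqrt_le_sqrt_div_of_sq_le hsq _

/-- For a simple graph with `n` vertices, `m` edges, `W ≥ m` wedges, `T > 0` triangles
and transitivity `κ = 3T/W`, we have `m / √T ≤ √(3n/κ)`. -/
theorem edges_div_sqrt_triangles_le
    {V : Type*} [Fintype V] [DecidableEq V] (G : SimpleGraph V) [DecidableRel G.Adj]
    (n m W T : ℕ) (hn : n = Fintype.card V) (hm : m = G.edgeFinset.card)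
    (hW : W = ∑ v : V, (G.degree v).choose 2)
    (hT : T = (G.cliqueFinset 3).card)
    (hT0 : 0 < T) (hWm : m ≤ W)
    (κ : ℝ) (hκ : κ = 3 * (T : ℝ) / (W : ℝ)) :
    (m : ℝ) / Real.sqrt T ≤ Real.sqrt (3 * n / κ) :=
  edges_div_sqrt_triangles_le_general G n m W T hn hm hW hWm κ hκ
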